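/- Let A, A' : ℕ³ → ℚ both satisfy: (i) A(m) = 0 whenever m1 + m2 + m3 < 3; (ii) A(a1,a2,b) = 0 unless a1 ≡ a2 (mod 3); (iii) A(a1,a2,b) = A(a2,a1,b); (iv) A(1,1,1) = 1, A(3,0,0) = 4/3, A(0,0,3) = 1/2; and (v) the A4-WDVV equations. If in addition A(0,0,n) = A'(0,0,n) for all n ∈ ℕ, and Σ_{a+b=n} C(n,a)·A(a,b,0) = Σ_{a+b=n} C(n,a)·A'(a,b,0) for all n ∈ ℕ, then A = A'. -/

import Mathlib

open Finset

/-- The standard basis vector `e_c` of `ℕ³`. -/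
def e (c : Fin 3) : Fin 3 → ℕ := Pi.single c 1

/-- Product of binomial coefficients `B(v,p) = C(v₁,p₁)·C(v₂,p₂)·C(v₃,p₃)`. -/
def B (v p : Fin 3 → ℕ) : ℕ := ∏ i : Fin 3, Nat.choose (v i) (p i)

/-- The pairing `g` on the non-trivial conjugacy classes of `A₄`: `σ₁` and `σ₂` are
inverse classes with centralizer of order 3, `ζ` is self-inverse with centralizer of
order 4. -/
def gp : Fin 3 → Fin 3 → ℚ := ![![0, 1/3, 0], ![1/3, 0, 0], ![0, 0, 1/4]]

/-- The inverse pairing `ĝ`. -/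
def gh : Fin 3 → Fin 3 → ℚ := ![![0, 3, 0], ![3, 0, 0], ![0, 0, 4]]

lemma e0 : e 0 = ![1,0,0] := by funext i; fin_cases i <;> rfl
lemma e1 : e 1 = ![0,1,0] := by funext i; fin_cases i <;> rfl
lemma e2 : e 2 = ![0,0,1] := by funext i; fin_cases i <;> rfl

lemma addv (a b c x y z : ℕ) : (![a,b,c] + ![x,y,z] : Fin 3 → ℕ) = ![a+x,b+y,c+z] := by
  funext i; fin_cases i <;> rfl

lemma comp_swap (a b c : ℕ) : (![a,b,c] ∘ Equiv.swap 0 1 : Fin 3 → ℕ) = ![b,a,c] := by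
  funext i; fin_cases i
  · simp [Equiv.swap_apply_left]
  · simp [Equiv.swap_apply_right]
  · show ![a,b,c] ((Equiv.swap 0 1 : Equiv.Perm (Fin 3)) 2) = c
    rw [Equiv.swap_apply_of_ne_of_ne (by decide) (by decide)]
    rfl

lemma vec_eta (w : Fin 3 → ℕ) : w = ![w 0, w 1, w 2] := by
  funext i; fin_cases i <;> rfl

lemma S_add_e (w : Fin 3 → ℕ) (i : Fin 3) :
    (w + e i) 0 + (w + e i) 1 + (w + e i) 2 = (w 0 + w 1 + w 2) + 1 := by
  fin_cases i <;> simp [e0, e1, e2, Pi.add_apply] <;> ring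

lemma B_zero (v : Fin 3 → ℕ) : B v 0 = 1 := by simp [B]
lemma B_self (v : Fin 3 → ℕ) : B v v = 1 := by simp [B]



lemma binom_step (n : ℕ) (f : ℕ → ℚ) :
    ∑ a ∈ range (n+2), (Nat.choose (n+1) a : ℚ) * f a
      = ∑ a ∈ range (n+1), (Nat.choose n a : ℚ) * (f a + f (a+1)) := by
  have h1 : ∑ a ∈ range (n+2), (Nat.choose (n+1) a : ℚ) * f a
      = (Nat.choose (n+1) 0 : ℚ) * f 0
        + ∑ a ∈ range (n+1), (Nat.choose (n+1) (a+1) : ℚ) * f (a+1) := by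
    rw [Finset.sum_range_succ' (fun a => (Nat.choose (n+1) a : ℚ) * f a) (n+1)]
    ring
  rw [h1]
  have h3 : ∑ a ∈ range (n+1), (Nat.choose (n+1) (a+1) : ℚ) * f (a+1)
      = ∑ a ∈ range (n+1), (Nat.choose n a : ℚ) * f (a+1)
        + ∑ a ∈ range (n+1), (Nat.choose n (a+1) : ℚ) * f (a+1) := by
    rw [← Finset.sum_add_distrib]
    refine Finset.sum_congr rfl (fun a _ => ?_)
    rw [Nat.choose_succ_succ]; push_cast; ring
  rw [h3]
  have h4 : (Nat.choose (n+1) 0 : ℚ) * f 0 + ∑ a ∈ range (n+1), (Nat.choose n (a+1) : ℚ) * f (a+1)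
      = ∑ a ∈ range (n+1), (Nat.choose n a : ℚ) * f a := by
    rw [Finset.sum_range_succ' (fun a => (Nat.choose n a : ℚ) * f a) n]
    have hz : (Nat.choose n (n+1) : ℚ) = 0 := by
      rw [Nat.choose_eq_zero_of_lt (by omega)]; norm_num
    rw [Finset.sum_range_succ (fun a => (Nat.choose n (a+1) : ℚ) * f (a+1)) n, hz]
    simp; ring
  have h5 : ∑ a ∈ range (n+1), (Nat.choose n a : ℚ) * (f a + f (a+1))
      = ∑ a ∈ range (n+1), (Nat.choose n a : ℚ) * f a
        + ∑ a ∈ range (n+1), (Nat.choose n a : ℚ) * f (a+1) := by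
    rw [← Finset.sum_add_distrib]
    exact Finset.sum_congr rfl (fun a _ => by ring)
  rw [h5]; linarith

lemma binom_step2 (n : ℕ) (f : ℕ → ℚ) :
    ∑ a ∈ range (n+3), (Nat.choose (n+2) a : ℚ) * f a
      = ∑ a ∈ range (n+1), (Nat.choose n a : ℚ) * (f a + 2 * f (a+1) + f (a+2)) := by
  have h1 : ∑ a ∈ range (n+3), (Nat.choose (n+2) a : ℚ) * f a
      = ∑ a ∈ range (n+2), (Nat.choose (n+1) a : ℚ) * (f a + f (a+1)) := binom_step (n+1) f
  rw [h1, binom_step n (fun a => f a + f (a+1))]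
  exact Finset.sum_congr rfl (fun a _ => by ring)

/-- residue-class sums of binomial coefficients relative to the middle -/
def ub (m : ℕ) (r : ZMod 6) : ℚ :=
  ∑ c ∈ range (2*m+1), (Nat.choose (2*m) c : ℚ) * (if (c : ZMod 6) = (m : ZMod 6) + r then 1 else 0)

lemma ub_rec (m : ℕ) (r : ZMod 6) :
    ub (m+1) r = ub m (r-1) + 2 * ub m r + ub m (r+1) := by
  have key : ub (m+1) r = ∑ c ∈ range (2*m+1), (Nat.choose (2*m) c : ℚ) *
      ((if (c : ZMod 6) = (m : ZMod 6) + (r+1) then (1:ℚ) else 0)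
        + 2 * (if (c : ZMod 6) = (m : ZMod 6) + r then 1 else 0)
        + (if (c : ZMod 6) = (m : ZMod 6) + (r-1) then 1 else 0)) := by
    have h0 : ub (m+1) r = ∑ c ∈ range (2*m+3), (Nat.choose (2*m+2) c : ℚ) *
        (if (c : ZMod 6) = ((m+1 : ℕ) : ZMod 6) + r then 1 else 0) := by
      rw [ub, show 2*(m+1) = 2*m+2 from by ring, show 2*m+2+1 = 2*m+3 from by omega]
    rw [h0, binom_step2 (2*m) _]
    refine Finset.sum_congr rfl (fun c _ => ?_)
    have c1 : ((c+1 : ℕ) : ZMod 6) = (c : ZMod 6) + 1 := by push_cast; ring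
    have c2 : ((c+2 : ℕ) : ZMod 6) = (c : ZMod 6) + 2 := by push_cast; ring
    have m1 : ((m+1 : ℕ) : ZMod 6) = (m : ZMod 6) + 1 := by push_cast; ring
    rw [c1, c2, m1]
    have q1 : ((c : ZMod 6) = (m : ZMod 6) + 1 + r) ↔ ((c : ZMod 6) = (m : ZMod 6) + (r+1)) := by
      constructor <;> (intro h; rw [h]; ring)
    have q2 : ((c : ZMod 6) + 1 = (m : ZMod 6) + 1 + r) ↔ ((c : ZMod 6) = (m : ZMod 6) + r) := by
      constructor <;> intro h
      · linear_combination h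
      · rw [h]; ring
    have q3 : ((c : ZMod 6) + 2 = (m : ZMod 6) + 1 + r) ↔ ((c : ZMod 6) = (m : ZMod 6) + (r-1)) := by
      constructor <;> intro h
      · linear_combination h
      · rw [h]; ring
    rw [if_congr q1 rfl rfl, if_congr q2 rfl rfl, if_congr q3 rfl rfl]
  rw [key, ub, ub, ub, Finset.mul_sum, ← Finset.sum_add_distrib, ← Finset.sum_add_distrib]
  exact Finset.sum_congr rfl (fun c _ => by ring)



lemma ub_base (r : ZMod 6) : ub 1 r = (if r = 0 then 2 else if r = 1 ∨ r = 5 then 1 else 0) := by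
  rw [ub]
  norm_num [Finset.sum_range_succ]
  fin_cases r <;> simp (config := { decide := true }) [show ((1:ZMod 6)=0) ↔ False from by decide, show ((5:ZMod 6)=0) ↔ False from by decide]
  all_goals (split_ifs <;> norm_num <;> simp_all (config := { decide := true }) [ZMod] )

lemma PQR (k : ℕ) : ub (k+1) 0 - ub (k+1) 3 = 2*3^k ∧ ub (k+1) 5 - ub (k+1) 2 = 3^k
    ∧ ub (k+1) 1 - ub (k+1) 4 = 3^k := by
  induction k with
  | zero =>
    rw [ub_base, ub_base, ub_base, ub_base, ub_base, ub_base]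
    simp (config := { decide := true })
  | succ k ih =>
    obtain ⟨p, q, r⟩ := ih
    have e1 : ((0:ZMod 6)-1, (0:ZMod 6)+1) = (5, 1) := by decide
    have h0 := ub_rec (k+1) 0
    have h3 := ub_rec (k+1) 3
    have h5 := ub_rec (k+1) 5
    have h2 := ub_rec (k+1) 2
    have h1 := ub_rec (k+1) 1
    have h4 := ub_rec (k+1) 4
    rw [show (0:ZMod 6)-1 = 5 from by decide, show (0:ZMod 6)+1 = 1 from by decide] at h0
    rw [show (3:ZMod 6)-1 = 2 from by decide, show (3:ZMod 6)+1 = 4 from by decide] at h3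
    rw [show (5:ZMod 6)-1 = 4 from by decide, show (5:ZMod 6)+1 = 0 from by decide] at h5
    rw [show (2:ZMod 6)-1 = 1 from by decide, show (2:ZMod 6)+1 = 3 from by decide] at h2
    rw [show (1:ZMod 6)-1 = 0 from by decide, show (1:ZMod 6)+1 = 2 from by decide] at h1
    rw [show (4:ZMod 6)-1 = 3 from by decide, show (4:ZMod 6)+1 = 5 from by decide] at h4
    have hp : (3:ℚ)^(k+1) = 3 * 3^k := by ring
    refine ⟨?_, ?_, ?_⟩ <;> rw [hp] <;> linarith

lemma key_binom (k : ℕ) :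
    ∑ c ∈ range (2*(k+1)+1), (Nat.choose (2*(k+1)) c : ℚ) *
      (if (c : ZMod 6) = ((k+1 : ℕ) : ZMod 6) then (1:ℚ)
        else if (c : ZMod 6) = ((k+1 : ℕ) : ZMod 6) + 3 then -1 else 0)
    = 2*3^k := by
  obtain ⟨p, -, -⟩ := PQR k
  rw [← p, ub, ub, ← Finset.sum_sub_distrib]
  refine Finset.sum_congr rfl (fun c _ => ?_)
  simp only [add_zero]
  by_cases h1 : (c : ZMod 6) = ((k+1 : ℕ) : ZMod 6)
  · have h2 : ¬ ((c : ZMod 6) = ((k+1 : ℕ) : ZMod 6) + 3) := by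
      rw [h1]; intro h
      have h3 : (0 : ZMod 6) = 3 := by linear_combination h
      exact absurd h3 (by decide)
    rw [if_pos h1, if_pos h1, if_neg h2]; ring
  · by_cases h2 : (c : ZMod 6) = ((k+1 : ℕ) : ZMod 6) + 3
    · rw [if_neg h1, if_pos h2, if_neg h1, if_pos h2]; ring
    · rw [if_neg h1, if_neg h2, if_neg h1, if_neg h2]; ring

/-- three point values -/
def T3 (i j k : Fin 3) : ℚ :=
  if i = j ∧ j = k then (if i = 2 then 1/2 else 4/3)
  else if i ≠ j ∧ j ≠ k ∧ i ≠ k then 1 else 0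

lemma ghv00 : gh 0 0 = 0 := rfl
lemma ghv01 : gh 0 1 = 3 := rfl
lemma ghv02 : gh 0 2 = 0 := rfl
lemma ghv10 : gh 1 0 = 3 := rfl
lemma ghv11 : gh 1 1 = 0 := rfl
lemma ghv12 : gh 1 2 = 0 := rfl
lemma ghv20 : gh 2 0 = 0 := rfl
lemma ghv21 : gh 2 1 = 0 := rfl
lemma ghv22 : gh 2 2 = 4 := rfl
lemma tv000 : T3 0 0 0 = 4/3 := rfl
lemma tv001 : T3 0 0 1 = 0 := rfl
lemma tv002 : T3 0 0 2 = 0 := rfl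
lemma tv010 : T3 0 1 0 = 0 := rfl
lemma tv011 : T3 0 1 1 = 0 := rfl
lemma tv012 : T3 0 1 2 = 1 := rfl
lemma tv020 : T3 0 2 0 = 0 := rfl
lemma tv021 : T3 0 2 1 = 1 := rfl
lemma tv022 : T3 0 2 2 = 0 := rfl
lemma tv100 : T3 1 0 0 = 0 := rfl
lemma tv101 : T3 1 0 1 = 0 := rfl
lemma tv102 : T3 1 0 2 = 1 := rfl
lemma tv110 : T3 1 1 0 = 0 := rfl
lemma tv111 : T3 1 1 1 = 4/3 := rfl
lemma tv112 : T3 1 1 2 = 0 := rfl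
lemma tv120 : T3 1 2 0 = 1 := rfl
lemma tv121 : T3 1 2 1 = 0 := rfl
lemma tv122 : T3 1 2 2 = 0 := rfl
lemma tv200 : T3 2 0 0 = 0 := rfl
lemma tv201 : T3 2 0 1 = 1 := rfl
lemma tv202 : T3 2 0 2 = 0 := rfl
lemma tv210 : T3 2 1 0 = 1 := rfl
lemma tv211 : T3 2 1 1 = 0 := rfl
lemma tv212 : T3 2 1 2 = 0 := rfl
lemma tv220 : T3 2 2 0 = 0 := rfl
lemma tv221 : T3 2 2 1 = 0 := rfl
lemma tv222 : T3 2 2 2 = 1/2 := rfl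
lemma ev00 : e 0 0 = 1 := rfl
lemma ev01 : e 0 1 = 0 := rfl
lemma ev02 : e 0 2 = 0 := rfl
lemma ev10 : e 1 0 = 0 := rfl
lemma ev11 : e 1 1 = 1 := rfl
lemma ev12 : e 1 2 = 0 := rfl
lemma ev20 : e 2 0 = 0 := rfl
lemma ev21 : e 2 1 = 0 := rfl
lemma ev22 : e 2 2 = 1 := rfl

lemma vaddE (a b c : ℕ) (i j k : Fin 3) :
    (![a,b,c] : Fin 3 → ℕ) + e i + e j + e k
      = ![a + (e i 0 + e j 0 + e k 0), b + (e i 1 + e j 1 + e k 1), c + (e i 2 + e j 2 + e k 2)] := by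
  funext t
  fin_cases t
  · show (![a,b,c] + e i + e j + e k) 0 = ![a + (e i 0 + e j 0 + e k 0), _, _] 0
    simp only [Pi.add_apply, Matrix.cons_val_zero]
    omega
  · show (![a,b,c] + e i + e j + e k) 1 = ![_, b + (e i 1 + e j 1 + e k 1), _] 1
    simp only [Pi.add_apply, Matrix.cons_val_one, Matrix.head_cons, Matrix.cons_val_zero]
    omega
  · show (![a,b,c] + e i + e j + e k) 2 = ![_, _, c + (e i 2 + e j 2 + e k 2)] 2
    have l2 : ∀ x y z : ℕ, (![x,y,z] : Fin 3 → ℕ) 2 = z := fun _ _ _ => rfl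
    simp only [Pi.add_apply, l2]
    omega

lemma zmod6 : (6 : ZMod 6) = 0 := by decide

lemma zmod6_add (a b : ℕ) : ((a + 3*b : ℕ) : ZMod 6)
    = (a : ZMod 6) + (if b % 2 = 0 then 0 else 3) := by
  obtain ⟨t, ht⟩ : ∃ t, b = 2*t ∨ b = 2*t+1 := ⟨b/2, by omega⟩
  rcases ht with rfl | rfl
  · rw [if_pos (by omega)]; push_cast
    linear_combination (t : ZMod 6) * zmod6
  · rw [if_neg (by omega)]; push_cast
    linear_combination (t : ZMod 6) * zmod6

lemma inner_step (N : ℕ) (hN : 4 ≤ N) (D : (Fin 3 → ℕ) → ℚ)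
    (hDmon : ∀ a b c : ℕ, a % 3 ≠ b % 3 → D ![a,b,c] = 0)
    (hDsym : ∀ a b c : ℕ, D ![a,b,c] = D ![b,a,c])
    (R1 : ∀ a b c : ℕ, a+b+c+3 = N → 2 * D ![a+1,b+1,c+1] = D ![a+3,b,c] + D ![a,b+3,c])
    (R2 : ∀ a b c : ℕ, a+b+c+3 = N → D ![a,b,c+3] = D ![a+1,b+1,c+1])
    (R4 : ∀ a b c : ℕ, a+b+c+3 = N → D ![a,b+1,c+2] = D ![a+2,b,c+1])
    (R5 : ∀ a b c : ℕ, a+b+c+3 = N → D ![a,b+2,c+1] = D ![a+1,b,c+2])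
    (hz : D ![0,0,N] = 0)
    (hs : ∑ a ∈ Finset.range (N+1), (Nat.choose N a : ℚ) * D ![a, N-a, 0] = 0) :
    ∀ a b c : ℕ, a + b + c = N → D ![a,b,c] = 0 := by
  -- the diagonal chain from ⟨ζ^N⟩
  have chainZ : ∀ k, 2*k+1 ≤ N → D ![k, k, N-2*k] = 0 := by
    intro k
    induction k with
    | zero => intro _; simpa using hz
    | succ k ih =>
      intro h
      have h1 : D ![k,k,N-2*k] = 0 := ih (by omega)
      have h2 := R2 k k (N-2*k-3) (by omega)
      rw [show N-2*k-3+3 = N-2*k from by omega,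
          show N-2*k-3+1 = N-2*(k+1) from by omega] at h2
      rw [← h2]; exact h1
  -- the b = 1 layer is zero
  have shift3y : ∀ a, a + 4 ≤ N → D ![a, N-1-a, 1] = D ![a+3, N-1-(a+3), 1] := by
    intro a ha
    have h5 := R5 a (N-3-a) 0 (by omega)
    rw [show N-3-a+2 = N-1-a from by omega] at h5
    have h4 := R4 (a+1) (N-4-a) 0 (by omega)
    rw [show N-4-a+1 = N-3-a from by omega, show (0:ℕ)+2 = 2 from rfl,
        show (0:ℕ)+1 = 1 from rfl, show a+1+2 = a+3 from by omega,
        show N-4-a = N-1-(a+3) from by omega] at h4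
    rw [h5, ← h4]
  have up3 : ∀ j a, a + 3*j ≤ N-1 → D ![a+3*j, N-1-(a+3*j), 1] = D ![a, N-1-a, 1] := by
    intro j
    induction j with
    | zero => intro a _; norm_num
    | succ j ih =>
      intro a h
      have h1 := ih (a+3) (by omega)
      rw [show a+3+3*j = a+3*(j+1) from by omega] at h1
      rw [h1, ← shift3y a (by omega)]
  have anchY : ∃ astar, astar ≤ N-1 ∧ (2*astar) % 3 = (N-1) % 3 ∧ D ![astar, N-1-astar, 1] = 0 := by
    rcases Nat.even_or_odd N with ⟨m, hm⟩ | ⟨m, hm⟩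
    · -- N = m + m, m ≥ 2
      have hm2 : 2 ≤ m := by omega
      have a0 : D ![m-1, m-1, 2] = 0 := by
        have := chainZ (m-1) (by omega)
        rwa [show N-2*(m-1) = 2 from by omega] at this
      have h4 := R4 (m-1) (m-2) 0 (by omega)
      rw [show m-2+1 = m-1 from by omega, show (0:ℕ)+2 = 2 from rfl,
          show (0:ℕ)+1 = 1 from rfl, show m-1+2 = m+1 from by omega] at h4
      refine ⟨m+1, by omega, by omega, ?_⟩
      rw [show N-1-(m+1) = m-2 from by omega, ← h4]
      exact a0
    · -- N = 2m+1
      refine ⟨m, by omega, by omega, ?_⟩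
      rw [show N-1-m = m from by omega]
      have := chainZ m (by omega)
      rwa [show N-2*m = 1 from by omega] at this
  have Y : ∀ a, a ≤ N-1 → D ![a, N-1-a, 1] = 0 := by
    intro a ha
    by_cases hr : a % 3 = (N-1-a) % 3
    · obtain ⟨astar, hs1, hs2, hs3⟩ := anchY
      have hmod : a % 3 = astar % 3 := by omega
      rcases le_total a astar with hle | hle
      · obtain ⟨j, hj⟩ : ∃ j, astar = a + 3*j := ⟨(astar-a)/3, by omega⟩
        have := up3 j a (by omega)
        rw [← hj] at this
        rw [← this]; exact hs3
      · obtain ⟨j, hj⟩ : ∃ j, a = astar + 3*j := ⟨(a-astar)/3, by omega⟩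
        have := up3 j astar (by omega)
        rw [← hj] at this
        rw [this]; exact hs3
    · exact hDmon a (N-1-a) 1 hr
  -- step by 3 with sign flip on the b = 0 layer
  have X3 : ∀ c, c + 3 ≤ N → D ![c+3, N-(c+3), 0] = - D ![c, N-c, 0] := by
    intro c hc
    have h1 := R1 c (N-3-c) 0 (by omega)
    rw [show N-3-c+1 = N-1-(c+1) from by omega, show (0:ℕ)+1 = 1 from rfl,
        show N-3-c+3 = N-c from by omega, show N-3-c = N-(c+3) from by omega] at h1
    have hy := Y (c+1) (by omega)
    rw [hy] at h1
    linarith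
  have alt : ∀ j c, c + 3*j ≤ N → D ![c+3*j, N-(c+3*j), 0] = (-1)^j * D ![c, N-c, 0] := by
    intro j
    induction j with
    | zero => intro c _; norm_num
    | succ j ih =>
      intro c h
      have h1 := ih c (by omega)
      have h2 := X3 (c+3*j) (by omega)
      rw [show c+3*j+3 = c+3*(j+1) from by omega] at h2
      rw [h2, h1]; ring
  -- the b = 0 layer is zero
  have b0 : ∀ c, c ≤ N → D ![c, N-c, 0] = 0 := by
    rcases Nat.even_or_odd N with ⟨m, hm⟩ | ⟨m, hm⟩
    · -- even case: N = m + m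
      have hm2 : 2 ≤ m := by omega
      obtain ⟨k, hk⟩ : ∃ k, m = k+1 := ⟨m-1, by omega⟩
      -- pointwise description relative to the middle
      have point : ∀ c, c ≤ N → D ![c, N-c, 0]
          = (if (c : ZMod 6) = (m : ZMod 6) then (1:ℚ)
              else if (c : ZMod 6) = (m : ZMod 6) + 3 then -1 else 0) * D ![m, m, 0] := by
        intro c hc
        by_cases hr : c % 3 = m % 3
        · rcases le_total m c with hle | hle
          · obtain ⟨j, hj⟩ : ∃ j, c = m + 3*j := ⟨(c-m)/3, by omega⟩
            have ha := alt j m (by omega)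
            rw [← hj, show N - m = m from by omega] at ha
            rw [ha, hj, zmod6_add m j]
            by_cases hp : j % 2 = 0
            · rw [if_pos hp, add_zero, if_pos rfl]
              obtain ⟨t, ht⟩ : ∃ t, j = 2*t := ⟨j/2, by omega⟩
              rw [ht, pow_mul]; norm_num
            · rw [if_neg hp]
              have hne : ¬((m : ZMod 6) + 3 = (m : ZMod 6)) := by
                intro h
                have : (3 : ZMod 6) = 0 := by linear_combination h
                exact absurd this (by decide)
              rw [if_neg hne, if_pos rfl]
              obtain ⟨t, ht⟩ : ∃ t, j = 2*t+1 := ⟨j/2, by omega⟩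
              rw [ht, pow_succ, pow_mul]; norm_num
          · obtain ⟨j, hj⟩ : ∃ j, m = c + 3*j := ⟨(m-c)/3, by omega⟩
            have ha := alt j c (by omega)
            rw [← hj] at ha
            rw [show N - m = m from by omega] at ha
            -- ha : D ![m, m, 0] = (-1)^j * D ![c, N-c, 0]
            have hmz : ((m : ℕ) : ZMod 6) = ((c : ℕ) : ZMod 6) + (if j % 2 = 0 then 0 else 3) := by
              rw [hj, zmod6_add c j]
            by_cases hp : j % 2 = 0
            · rw [if_pos hp, add_zero] at hmz
              rw [if_pos hmz.symm, one_mul]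
              obtain ⟨t, ht⟩ : ∃ t, j = 2*t := ⟨j/2, by omega⟩
              rw [ht, pow_mul] at ha
              norm_num at ha
              rw [ha]
            · rw [if_neg hp] at hmz
              have hcz : ((c : ℕ) : ZMod 6) = ((m : ℕ) : ZMod 6) + 3 := by
                rw [hmz]; linear_combination -zmod6
              have hne : ¬(((c : ℕ) : ZMod 6) = ((m : ℕ) : ZMod 6)) := by
                intro h
                rw [h] at hcz
                have h3 : (3 : ZMod 6) = 0 := by linear_combination -hcz
                exact absurd h3 (by decide)
              rw [if_neg hne, if_pos hcz]
              obtain ⟨t, ht⟩ : ∃ t, j = 2*t+1 := ⟨j/2, by omega⟩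
              rw [ht, pow_succ, pow_mul] at ha
              norm_num at ha
              linarith [ha]
        · have h1 : c % 3 ≠ (N - c) % 3 := by omega
          rw [hDmon c (N-c) 0 h1]
          have hn1 : ¬((c : ZMod 6) = (m : ZMod 6)) := by
            intro h
            have := (ZMod.natCast_eq_natCast_iff c m 6).mp h
            have : c % 6 = m % 6 := this
            omega
          have hn2 : ¬((c : ZMod 6) = (m : ZMod 6) + 3) := by
            intro h
            have h' : (c : ZMod 6) = ((m + 3 : ℕ) : ZMod 6) := by push_cast; linear_combination h
            have := (ZMod.natCast_eq_natCast_iff c (m+3) 6).mp h'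
            have : c % 6 = (m+3) % 6 := this
            omega
          rw [if_neg hn1, if_neg hn2, zero_mul]
      have hX : D ![m, m, 0] = 0 := by
        have hsum : ∑ c ∈ range (N+1), (Nat.choose N c : ℚ) * D ![c, N-c, 0]
            = (∑ c ∈ range (N+1), (Nat.choose N c : ℚ) *
                (if (c : ZMod 6) = (m : ZMod 6) then (1:ℚ)
                  else if (c : ZMod 6) = (m : ZMod 6) + 3 then -1 else 0)) * D ![m, m, 0] := by
          rw [Finset.sum_mul]
          refine Finset.sum_congr rfl (fun c hc => ?_)
          have hcN : c ≤ N := by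
            have := Finset.mem_range.mp hc; omega
          rw [point c hcN]
          ring
        rw [hsum] at hs
        rw [show N = 2*(k+1) from by omega, show (m:ℕ) = k+1 from hk] at hs
        rw [key_binom k] at hs
        have h3 : (2*3^k : ℚ) ≠ 0 := by positivity
        rw [show (m:ℕ) = k+1 from hk]
        exact (mul_eq_zero.mp hs).resolve_left h3
      intro c hc
      rw [point c hc, hX, mul_zero]
    · -- odd case : N = 2m+1
      have half : ∀ c, 2*c+1 ≤ N → D ![c, N-c, 0] = 0 := by
        intro c hc
        by_cases hr : c % 3 = (N-c) % 3
        · obtain ⟨t, ht⟩ : ∃ t, N - 2*c = 3*t := ⟨(N-2*c)/3, by omega⟩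
          have hto : t % 2 = 1 := by omega
          have ha := alt t c (by omega)
          rw [show c+3*t = N-c from by omega, show N-(N-c) = c from by omega] at ha
          have hsymc := hDsym (N-c) c 0
          have hneg : (-1:ℚ)^t = -1 := Odd.neg_one_pow ⟨t/2, by omega⟩
          rw [hneg] at ha
          have hsym2 := hDsym c (N-c) 0
          -- ha : D ![N-c, c, 0] = -D![c,N-c,0]; hsymc : D![N-c,c,0] = D![c,N-c,0]
          linarith [ha, hsymc]
        · exact hDmon c (N-c) 0 hr
      intro c hc
      by_cases h2 : 2*c+1 ≤ N
      · exact half c h2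
      · have h3 := half (N-c) (by omega)
        rw [show N-(N-c) = c from by omega] at h3
        rw [hDsym c (N-c) 0]
        exact h3
  -- finish: strong induction on the third coordinate
  intro a b c
  induction c using Nat.strong_induction_on generalizing a b with
  | _ c ih =>
    intro hsum
    rcases Nat.lt_or_ge c 3 with hc3 | hc3
    · interval_cases c
      · rw [show b = N - a from by omega]
        exact b0 a (by omega)
      · have := Y a (by omega)
        rwa [show N-1-a = b from by omega] at this
      · rcases Nat.eq_zero_or_pos b with rfl | hb
        · rw [hDsym a 0 2]
          have h4 := R4 0 (a-1) 0 (by omega)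
          rw [show a-1+1 = a from by omega, show (0:ℕ)+2 = 2 from rfl,
              show (0:ℕ)+1 = 1 from rfl] at h4
          rw [h4]
          have := Y 2 (by omega)
          rwa [show N-1-2 = a-1 from by omega] at this
        · have h4 := R4 a (b-1) 0 (by omega)
          rw [show b-1+1 = b from by omega, show (0:ℕ)+2 = 2 from rfl,
              show (0:ℕ)+1 = 1 from rfl] at h4
          rw [h4]
          have := Y (a+2) (by omega)
          rwa [show N-1-(a+2) = b-1 from by omega] at this
    · have h2 := R2 a b (c-3) (by omega)
      rw [show c-3+3 = c from by omega, show c-3+1 = c-2 from by omega] at h2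
      rw [h2]
      exact ih (c-2) (by omega) (a+1) (b+1) (by omega)

lemma S_add_e3 (w : Fin 3 → ℕ) (i j k : Fin 3) :
    (w + e i + e j + e k) 0 + (w + e i + e j + e k) 1 + (w + e i + e j + e k) 2
      = (w 0 + w 1 + w 2) + 3 := by
  rw [S_add_e (w + e i + e j) k, S_add_e (w + e i) j, S_add_e w i]

lemma icc_collapse (v : Fin 3 → ℕ) (hv : v ≠ 0) (F F' : (Fin 3 → ℕ) → ℚ)
    (hmid : ∀ p ∈ Finset.Icc 0 v, p ≠ 0 → p ≠ v → F p = F' p) :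
    (∑ p ∈ Finset.Icc 0 v, (B v p : ℚ) * F p) - (∑ p ∈ Finset.Icc 0 v, (B v p : ℚ) * F' p)
      = (F 0 - F' 0) + (F v - F' v) := by
  rw [← Finset.sum_sub_distrib]
  have hsub : ({0, v} : Finset (Fin 3 → ℕ)) ⊆ Finset.Icc 0 v := by
    intro p hp
    rcases Finset.mem_insert.mp hp with rfl | hp
    · exact Finset.mem_Icc.mpr ⟨le_refl _, fun t => Nat.zero_le _⟩
    · rw [Finset.mem_singleton.mp hp]
      exact Finset.mem_Icc.mpr ⟨fun t => Nat.zero_le _, le_refl _⟩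
  rw [← Finset.sum_subset hsub (fun p hp hnp => ?_)]
  · have h0v : (0 : Fin 3 → ℕ) ≠ v := Ne.symm hv
    rw [Finset.sum_pair h0v, B_zero, B_self]
    push_cast
    ring
  · have h1 : p ≠ 0 := fun h => hnp (by rw [h]; exact Finset.mem_insert_self _ _)
    have h2 : p ≠ v := fun h => hnp (by rw [h]; exact Finset.mem_insert_of_mem (Finset.mem_singleton_self _))
    rw [hmid p hp h1 h2]
    ring

lemma master_ext (A A' : (Fin 3 → ℕ) → ℚ) (N : ℕ) (hN : 4 ≤ N)
    (hA3 : ∀ i j k : Fin 3, A (e i + e j + e k) = T3 i j k)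
    (hA3' : ∀ i j k : Fin 3, A' (e i + e j + e k) = T3 i j k)
    (IH : ∀ x : Fin 3 → ℕ, x 0 + x 1 + x 2 < N → A x = A' x)
    (hW : ∀ (i j n m : Fin 3) (v : Fin 3 → ℕ),
      12 * gp i j * gp n m * (if v = 0 then 1 else 0)
        + ∑ p ∈ Finset.Icc 0 v, (B v p : ℚ) *
            ∑ k : Fin 3, ∑ l : Fin 3,
              gh k l * A (p + e i + e j + e k) * A (v - p + e l + e n + e m)
      = 12 * gp i n * gp j m * (if v = 0 then 1 else 0)
        + ∑ p ∈ Finset.Icc 0 v, (B v p : ℚ) *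
            ∑ k : Fin 3, ∑ l : Fin 3,
              gh k l * A (p + e i + e n + e k) * A (v - p + e l + e j + e m))
    (hW' : ∀ (i j n m : Fin 3) (v : Fin 3 → ℕ),
      12 * gp i j * gp n m * (if v = 0 then 1 else 0)
        + ∑ p ∈ Finset.Icc 0 v, (B v p : ℚ) *
            ∑ k : Fin 3, ∑ l : Fin 3,
              gh k l * A' (p + e i + e j + e k) * A' (v - p + e l + e n + e m)
      = 12 * gp i n * gp j m * (if v = 0 then 1 else 0)
        + ∑ p ∈ Finset.Icc 0 v, (B v p : ℚ) *
            ∑ k : Fin 3, ∑ l : Fin 3,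
              gh k l * A' (p + e i + e n + e k) * A' (v - p + e l + e j + e m)) :
    ∀ (i j n m : Fin 3) (v : Fin 3 → ℕ), v 0 + v 1 + v 2 + 3 = N →
    (∑ k : Fin 3, ∑ l : Fin 3, gh k l * T3 i j k * (A (v + e l + e n + e m) - A' (v + e l + e n + e m)))
    + (∑ k : Fin 3, ∑ l : Fin 3, gh k l * (A (v + e i + e j + e k) - A' (v + e i + e j + e k)) * T3 l n m)
    = (∑ k : Fin 3, ∑ l : Fin 3, gh k l * T3 i n k * (A (v + e l + e j + e m) - A' (v + e l + e j + e m)))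
    + (∑ k : Fin 3, ∑ l : Fin 3, gh k l * (A (v + e i + e n + e k) - A' (v + e i + e n + e k)) * T3 l j m) := by
  intro i j n m v hv
  have hv0 : v ≠ 0 := by
    intro h
    rw [h] at hv
    simp only [Pi.zero_apply] at hv
    omega
  have h := hW i j n m v
  have h' := hW' i j n m v
  rw [if_neg hv0] at h h'
  simp only [mul_zero, zero_mul, zero_add] at h h'
  -- middle terms agree
  have hmid : ∀ (i' j' n' m' : Fin 3), ∀ p ∈ Finset.Icc 0 v, p ≠ 0 → p ≠ v →
      (∑ k : Fin 3, ∑ l : Fin 3,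
        gh k l * A (p + e i' + e j' + e k) * A (v - p + e l + e n' + e m'))
      = (∑ k : Fin 3, ∑ l : Fin 3,
        gh k l * A' (p + e i' + e j' + e k) * A' (v - p + e l + e n' + e m')) := by
    intro i' j' n' m' p hp hp0 hpv
    have hle := Pi.le_def.mp (Finset.mem_Icc.mp hp).2
    have hl0 := hle 0
    have hl1 := hle 1
    have hl2 := hle 2
    have hps : p 0 + p 1 + p 2 < v 0 + v 1 + v 2 := by
      by_contra hcon
      apply hpv
      have q0 : p 0 = v 0 := by omega
      have q1 : p 1 = v 1 := by omega
      have q2 : p 2 = v 2 := by omega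
      funext t
      fin_cases t
      · exact q0
      · exact q1
      · exact q2
    have hp1 : 1 ≤ p 0 + p 1 + p 2 := by
      by_contra hcon
      apply hp0
      have q0 : p 0 = 0 := by omega
      have q1 : p 1 = 0 := by omega
      have q2 : p 2 = 0 := by omega
      funext t
      fin_cases t
      · exact q0
      · exact q1
      · exact q2
    refine Finset.sum_congr rfl (fun k _ => Finset.sum_congr rfl (fun l _ => ?_))
    have e1 : A (p + e i' + e j' + e k) = A' (p + e i' + e j' + e k) := by
      apply IH
      rw [S_add_e3]
      omega
    have e2 : A (v - p + e l + e n' + e m') = A' (v - p + e l + e n' + e m') := by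
      apply IH
      rw [S_add_e3]
      have : (v - p) 0 + (v - p) 1 + (v - p) 2 = (v 0 - p 0) + (v 1 - p 1) + (v 2 - p 2) := rfl
      rw [this]
      omega
    rw [e1, e2]
  have hL := icc_collapse v hv0
    (fun p => ∑ k : Fin 3, ∑ l : Fin 3, gh k l * A (p + e i + e j + e k) * A (v - p + e l + e n + e m))
    (fun p => ∑ k : Fin 3, ∑ l : Fin 3, gh k l * A' (p + e i + e j + e k) * A' (v - p + e l + e n + e m))
    (hmid i j n m)
  have hR := icc_collapse v hv0
    (fun p => ∑ k : Fin 3, ∑ l : Fin 3, gh k l * A (p + e i + e n + e k) * A (v - p + e l + e j + e m))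
    (fun p => ∑ k : Fin 3, ∑ l : Fin 3, gh k l * A' (p + e i + e n + e k) * A' (v - p + e l + e j + e m))
    (hmid i n j m)
  -- convert the boundary terms
  have bL0 : ∀ (i' j' n' m' : Fin 3),
      (∑ k : Fin 3, ∑ l : Fin 3,
        gh k l * A ((0:Fin 3 → ℕ) + e i' + e j' + e k) * A (v - 0 + e l + e n' + e m'))
      - (∑ k : Fin 3, ∑ l : Fin 3,
        gh k l * A' ((0:Fin 3 → ℕ) + e i' + e j' + e k) * A' (v - 0 + e l + e n' + e m'))
      = ∑ k : Fin 3, ∑ l : Fin 3,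
          gh k l * T3 i' j' k * (A (v + e l + e n' + e m') - A' (v + e l + e n' + e m')) := by
    intro i' j' n' m'
    rw [← Finset.sum_sub_distrib]
    refine Finset.sum_congr rfl (fun k _ => ?_)
    rw [← Finset.sum_sub_distrib]
    refine Finset.sum_congr rfl (fun l _ => ?_)
    simp only [zero_add, tsub_zero]
    rw [hA3 i' j' k, hA3' i' j' k]
    ring
  have bLv : ∀ (i' j' n' m' : Fin 3),
      (∑ k : Fin 3, ∑ l : Fin 3,
        gh k l * A (v + e i' + e j' + e k) * A (v - v + e l + e n' + e m'))
      - (∑ k : Fin 3, ∑ l : Fin 3,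
        gh k l * A' (v + e i' + e j' + e k) * A' (v - v + e l + e n' + e m'))
      = ∑ k : Fin 3, ∑ l : Fin 3,
          gh k l * (A (v + e i' + e j' + e k) - A' (v + e i' + e j' + e k)) * T3 l n' m' := by
    intro i' j' n' m'
    rw [← Finset.sum_sub_distrib]
    refine Finset.sum_congr rfl (fun k _ => ?_)
    rw [← Finset.sum_sub_distrib]
    refine Finset.sum_congr rfl (fun l _ => ?_)
    simp only [tsub_self, zero_add]
    rw [hA3 l n' m', hA3' l n' m']
    ring
  rw [bL0 i j n m, bLv i j n m] at hL
  rw [bL0 i n j m, bLv i n j m] at hR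
  linarith [h, h', hL, hR]

lemma three_pt (A : (Fin 3 → ℕ) → ℚ)
    (hmon : ∀ m : Fin 3 → ℕ, m 0 % 3 ≠ m 1 % 3 → A m = 0)
    (hsymm : ∀ m : Fin 3 → ℕ, A m = A (m ∘ Equiv.swap 0 1))
    (h111 : A ![1,1,1] = 1) (h300 : A ![3,0,0] = 4/3) (h003 : A ![0,0,3] = 1/2) :
    ∀ i j k : Fin 3, A (e i + e j + e k) = T3 i j k := by
  have h030 : A ![0,3,0] = 4/3 := by
    rw [hsymm ![0,3,0], comp_swap]; exact h300
  intro i j k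
  fin_cases i <;> fin_cases j <;> fin_cases k <;>
    simp only [show (⟨0, by omega⟩ : Fin 3) = (0 : Fin 3) from rfl,
      show (⟨1, by omega⟩ : Fin 3) = (1 : Fin 3) from rfl,
      show (⟨2, by omega⟩ : Fin 3) = (2 : Fin 3) from rfl, e0, e1, e2, addv] <;>
    norm_num [T3, Fin.ext_iff] <;>
    first
      | exact h111
      | exact h300
      | exact h030
      | exact h003
      | (apply hmon; decide)

lemma lvl3_eq (A A' : (Fin 3 → ℕ) → ℚ)
    (hmon : ∀ m : Fin 3 → ℕ, m 0 % 3 ≠ m 1 % 3 → A m = 0)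
    (hmon' : ∀ m : Fin 3 → ℕ, m 0 % 3 ≠ m 1 % 3 → A' m = 0)
    (hsymm : ∀ m : Fin 3 → ℕ, A m = A (m ∘ Equiv.swap 0 1))
    (hsymm' : ∀ m : Fin 3 → ℕ, A' m = A' (m ∘ Equiv.swap 0 1))
    (h111 : A ![1,1,1] = 1) (h300 : A ![3,0,0] = 4/3) (h003 : A ![0,0,3] = 1/2)
    (h111' : A' ![1,1,1] = 1) (h300' : A' ![3,0,0] = 4/3) (h003' : A' ![0,0,3] = 1/2) :
    ∀ a b c : ℕ, a + b + c = 3 → A ![a,b,c] = A' ![a,b,c] := by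
  intro a b c h
  have ha : a ≤ 3 := by omega
  have hb : b ≤ 3 := by omega
  have hc : c ≤ 3 := by omega
  interval_cases a <;> interval_cases b <;> interval_cases c <;>
    first
      | omega
      | (rw [hmon _ (by decide), hmon' _ (by decide)])
      | (rw [h111, h111'])
      | (rw [h300, h300'])
      | (rw [h003, h003'])
      | (rw [hsymm ![0,3,0], comp_swap, hsymm' ![0,3,0], comp_swap, h300, h300'])


/-- The `A₄`-Hurwitz–Hodge integrals are uniquely determined by the WDVV equations,
the length-three integrals, and the integrals `⟨ζ^m⟩` and `⟨σ^m⟩^{S₄}`. -/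
theorem A4_integrals_unique
    (A A' : (Fin 3 → ℕ) → ℚ)
    -- (i) unstable vanishing
    (huns : ∀ m : Fin 3 → ℕ, m 0 + m 1 + m 2 < 3 → A m = 0)
    (huns' : ∀ m : Fin 3 → ℕ, m 0 + m 1 + m 2 < 3 → A' m = 0)
    -- (ii) monodromy condition: vanishing unless a₁ ≡ a₂ (mod 3)
    (hmon : ∀ m : Fin 3 → ℕ, m 0 % 3 ≠ m 1 % 3 → A m = 0)
    (hmon' : ∀ m : Fin 3 → ℕ, m 0 % 3 ≠ m 1 % 3 → A' m = 0)
    -- (iii) symmetry in the first two arguments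
    (hsymm : ∀ m : Fin 3 → ℕ, A m = A (m ∘ Equiv.swap 0 1))
    (hsymm' : ∀ m : Fin 3 → ℕ, A' m = A' (m ∘ Equiv.swap 0 1))
    -- (iv) the length-three integrals
    (h3 : A ![1, 1, 1] = 1 ∧ A ![3, 0, 0] = 4/3 ∧ A ![0, 0, 3] = 1/2)
    (h3' : A' ![1, 1, 1] = 1 ∧ A' ![3, 0, 0] = 4/3 ∧ A' ![0, 0, 3] = 1/2)
    -- (v) the A₄-WDVV equations
    (hWDVV : ∀ (i j n m : Fin 3) (v : Fin 3 → ℕ),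
      12 * gp i j * gp n m * (if v = 0 then 1 else 0)
        + ∑ p ∈ Finset.Icc 0 v, (B v p : ℚ) *
            ∑ k : Fin 3, ∑ l : Fin 3,
              gh k l * A (p + e i + e j + e k) * A (v - p + e l + e n + e m)
      = 12 * gp i n * gp j m * (if v = 0 then 1 else 0)
        + ∑ p ∈ Finset.Icc 0 v, (B v p : ℚ) *
            ∑ k : Fin 3, ∑ l : Fin 3,
              gh k l * A (p + e i + e n + e k) * A (v - p + e l + e j + e m))
    (hWDVV' : ∀ (i j n m : Fin 3) (v : Fin 3 → ℕ),
      12 * gp i j * gp n m * (if v = 0 then 1 else 0)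
        + ∑ p ∈ Finset.Icc 0 v, (B v p : ℚ) *
            ∑ k : Fin 3, ∑ l : Fin 3,
              gh k l * A' (p + e i + e j + e k) * A' (v - p + e l + e n + e m)
      = 12 * gp i n * gp j m * (if v = 0 then 1 else 0)
        + ∑ p ∈ Finset.Icc 0 v, (B v p : ℚ) *
            ∑ k : Fin 3, ∑ l : Fin 3,
              gh k l * A' (p + e i + e n + e k) * A' (v - p + e l + e j + e m))
    -- agreement of the specializations ⟨ζⁿ⟩
    (hzeta : ∀ n : ℕ, A ![0, 0, n] = A' ![0, 0, n])
    -- agreement of the binomially weighted diagonal sums 2⟨σⁿ⟩^{S₄}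
    (hsigma : ∀ n : ℕ,
      ∑ a ∈ Finset.range (n + 1), (Nat.choose n a : ℚ) * A ![a, n - a, 0]
        = ∑ a ∈ Finset.range (n + 1), (Nat.choose n a : ℚ) * A' ![a, n - a, 0]) :
    A = A' := by
  have hA3 := three_pt A hmon hsymm h3.1 h3.2.1 h3.2.2
  have hA3' := three_pt A' hmon' hsymm' h3'.1 h3'.2.1 h3'.2.2
  have key : ∀ N : ℕ, ∀ w : Fin 3 → ℕ, w 0 + w 1 + w 2 = N → A w = A' w := by
    intro N
    induction N using Nat.strong_induction_on with
    | _ N IH =>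
      intro w hw
      rcases Nat.lt_or_ge N 3 with hlt | hge3
      · rw [huns w (by omega), huns' w (by omega)]
      · rcases Nat.lt_or_ge N 4 with hlt4 | hge4
        · have h3N : w 0 + w 1 + w 2 = 3 := by omega
          rw [vec_eta w]
          exact lvl3_eq A A' hmon hmon' hsymm hsymm' h3.1 h3.2.1 h3.2.2
            h3'.1 h3'.2.1 h3'.2.2 (w 0) (w 1) (w 2) h3N
        · have IH' : ∀ x : Fin 3 → ℕ, x 0 + x 1 + x 2 < N → A x = A' x :=
            fun x hx => IH _ hx x rfl
          have mast := master_ext A A' N hge4 hA3 hA3' IH' hWDVV hWDVV'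
          have R1 : ∀ a b c : ℕ, a+b+c+3 = N → 2 * (A ![a+1,b+1,c+1] - A' ![a+1,b+1,c+1]) = (A ![a+3,b,c] - A' ![a+3,b,c]) + (A ![a,b+3,c] - A' ![a,b+3,c]) := by
            intro a b c h
            have hM := mast 0 1 0 1 ![a,b,c] (by show a + b + c + 3 = N; exact h)
            simp only [Fin.sum_univ_three] at hM
            simp only [vaddE, ev00, ev01, ev02, ev10, ev11, ev12, ev20, ev21, ev22, Nat.reduceAdd, add_zero] at hM
            simp only [ghv00, ghv01, ghv02, ghv10, ghv11, ghv12, ghv20, ghv21, ghv22, tv000, tv001, tv002, tv010, tv011, tv012, tv020, tv021, tv022, tv100, tv101, tv102, tv110, tv111, tv112, tv120, tv121, tv122, tv200, tv201, tv202, tv210, tv211, tv212, tv220, tv221, tv222, zero_mul, mul_zero, zero_add, add_zero, one_mul, mul_one] at hM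
            linarith [hM]
          have R2 : ∀ a b c : ℕ, a+b+c+3 = N → (A ![a,b,c+3] - A' ![a,b,c+3]) = (A ![a+1,b+1,c+1] - A' ![a+1,b+1,c+1]) := by
            intro a b c h
            have hM := mast 0 1 2 2 ![a,b,c] (by show a + b + c + 3 = N; exact h)
            simp only [Fin.sum_univ_three] at hM
            simp only [vaddE, ev00, ev01, ev02, ev10, ev11, ev12, ev20, ev21, ev22, Nat.reduceAdd, add_zero] at hM
            simp only [ghv00, ghv01, ghv02, ghv10, ghv11, ghv12, ghv20, ghv21, ghv22, tv000, tv001, tv002, tv010, tv011, tv012, tv020, tv021, tv022, tv100, tv101, tv102, tv110, tv111, tv112, tv120, tv121, tv122, tv200, tv201, tv202, tv210, tv211, tv212, tv220, tv221, tv222, zero_mul, mul_zero, zero_add, add_zero, one_mul, mul_one] at hM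
            linarith [hM]
          have R4 : ∀ a b c : ℕ, a+b+c+3 = N → (A ![a,b+1,c+2] - A' ![a,b+1,c+2]) = (A ![a+2,b,c+1] - A' ![a+2,b,c+1]) := by
            intro a b c h
            have hM := mast 0 0 2 2 ![a,b,c] (by show a + b + c + 3 = N; exact h)
            simp only [Fin.sum_univ_three] at hM
            simp only [vaddE, ev00, ev01, ev02, ev10, ev11, ev12, ev20, ev21, ev22, Nat.reduceAdd, add_zero] at hM
            simp only [ghv00, ghv01, ghv02, ghv10, ghv11, ghv12, ghv20, ghv21, ghv22, tv000, tv001, tv002, tv010, tv011, tv012, tv020, tv021, tv022, tv100, tv101, tv102, tv110, tv111, tv112, tv120, tv121, tv122, tv200, tv201, tv202, tv210, tv211, tv212, tv220, tv221, tv222, zero_mul, mul_zero, zero_add, add_zero, one_mul, mul_one] at hM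
            linarith [hM]
          have R5 : ∀ a b c : ℕ, a+b+c+3 = N → (A ![a,b+2,c+1] - A' ![a,b+2,c+1]) = (A ![a+1,b,c+2] - A' ![a+1,b,c+2]) := by
            intro a b c h
            have hM := mast 0 0 1 2 ![a,b,c] (by show a + b + c + 3 = N; exact h)
            simp only [Fin.sum_univ_three] at hM
            simp only [vaddE, ev00, ev01, ev02, ev10, ev11, ev12, ev20, ev21, ev22, Nat.reduceAdd, add_zero] at hM
            simp only [ghv00, ghv01, ghv02, ghv10, ghv11, ghv12, ghv20, ghv21, ghv22, tv000, tv001, tv002, tv010, tv011, tv012, tv020, tv021, tv022, tv100, tv101, tv102, tv110, tv111, tv112, tv120, tv121, tv122, tv200, tv201, tv202, tv210, tv211, tv212, tv220, tv221, tv222, zero_mul, mul_zero, zero_add, add_zero, one_mul, mul_one] at hM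
            linarith [hM]
          have hDmon : ∀ a b c : ℕ, a % 3 ≠ b % 3 → A ![a,b,c] - A' ![a,b,c] = 0 := by
            intro a b c hab
            rw [hmon ![a,b,c] hab, hmon' ![a,b,c] hab]
            ring
          have hDsym : ∀ a b c : ℕ, A ![a,b,c] - A' ![a,b,c] = A ![b,a,c] - A' ![b,a,c] := by
            intro a b c
            rw [hsymm ![a,b,c], comp_swap, hsymm' ![a,b,c], comp_swap]
          have hz : A ![0,0,N] - A' ![0,0,N] = 0 := by rw [hzeta N]; ring
          have hsg : ∑ a ∈ Finset.range (N+1), (Nat.choose N a : ℚ) *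
              (A ![a, N-a, 0] - A' ![a, N-a, 0]) = 0 := by
            have hh := hsigma N
            have hsplit : ∑ a ∈ Finset.range (N+1), (Nat.choose N a : ℚ) *
                (A ![a, N-a, 0] - A' ![a, N-a, 0])
                = (∑ a ∈ Finset.range (N+1), (Nat.choose N a : ℚ) * A ![a,N-a,0])
                  - (∑ a ∈ Finset.range (N+1), (Nat.choose N a : ℚ) * A' ![a,N-a,0]) := by
              rw [← Finset.sum_sub_distrib]
              exact Finset.sum_congr rfl (fun x _ => by ring)
            rw [hsplit, hh]
            ring
          have hfin := inner_step N hge4 (fun w => A w - A' w) hDmon hDsym R1 R2 R4 R5 hz hsg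
            (w 0) (w 1) (w 2) hw
          have hfin' : A ![w 0, w 1, w 2] - A' ![w 0, w 1, w 2] = 0 := hfin
          rw [vec_eta w]
          linarith [hfin']
  funext w
  exact key (w 0 + w 1 + w 2) w rfl
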